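/- With notation as in the derivative formula for Green functions, define F₁(r) = d/dr (r·G(γ,γ'|r)) and inductively F_k(r) = d/dr (r²·F_{k-1}(r)) for k ≥ 2, and let I^(k)(r) = Σ_{γ⁽¹⁾,...,γ⁽ᵏ⁾∈Γ} G(γ,γ⁽¹⁾|r)·G(γ⁽¹⁾,γ⁽²⁾|r)···G(γ⁽ᵏ⁾,γ'|r). Then for all γ,γ' ∈ Γ and r ∈ [0,R_μ], F_k(r) = k!·r^{k-1}·I^(k)(r). -/
import Mathlib


open scoped ENNReal Classical

/-- `n`-fold convolution power of a measure `μ` on a group `Γ`, valued in `[0,∞]`. -/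
noncomputable def convPow {Γ : Type*} [Group Γ] (μ : Γ → ℝ≥0∞) : ℕ → Γ → ℝ≥0∞
  | 0 => fun γ => if γ = 1 then 1 else 0
  | n + 1 => fun γ => ∑' x : Γ, μ x * convPow μ n (x⁻¹ * γ)

/-- Green function `G(γ₁,γ₂|r) = Σ_{n≥0} r^n μ^{*n}(γ₁⁻¹γ₂)`. -/
noncomputable def Green {Γ : Type*} [Group Γ] (μ : Γ → ℝ≥0∞) (r : ℝ≥0∞) (γ₁ γ₂ : Γ) : ℝ≥0∞ :=
  ∑' n : ℕ, r ^ n * convPow μ n (γ₁⁻¹ * γ₂)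

/-- The radius of convergence `R_μ` of the Green function power series. -/
noncomputable def specRadius {Γ : Type*} [Group Γ] (μ : Γ → ℝ≥0∞) : ℝ≥0∞ :=
  sSup {r : ℝ≥0∞ | Green μ r 1 1 ≠ ⊤}

/-- Power series coefficients of `F_{k+1}`, where `F₁(r) = d/dr (r G(γ,γ'|r))` (so
`F₁ = Σ_n (n+1) μ^{*n}(γ⁻¹γ') r^n`) and inductively `F_{k+1}(r) = d/dr (r² F_k(r))`
(so the coefficient of `r^{n+1}` in `F_{k+1}` is `(n+2)` times the coefficient of `r^n`
in `F_k`, and the constant coefficient vanishes). `Fcoef μ γ γ' k n` is the coefficient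
of `r^n` in `F_{k+1}`. -/
noncomputable def Fcoef {Γ : Type*} [Group Γ] (μ : Γ → ℝ≥0∞) (γ γ' : Γ) : ℕ → ℕ → ℝ≥0∞
  | 0, n => ((n : ℝ≥0∞) + 1) * convPow μ n (γ⁻¹ * γ')
  | _ + 1, 0 => 0
  | k + 1, n + 1 => ((n : ℝ≥0∞) + 2) * Fcoef μ γ γ' k n

/-- `chainSum μ r γ k γ' = I^{(k)}(r) = Σ_{γ⁽¹⁾,…,γ⁽ᵏ⁾∈Γ} G(γ,γ⁽¹⁾|r)⋯G(γ⁽ᵏ⁾,γ'|r)`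
(with `chainSum μ r γ 0 γ' = G(γ,γ'|r)`). -/
noncomputable def chainSum {Γ : Type*} [Group Γ] (μ : Γ → ℝ≥0∞) (r : ℝ≥0∞) (γ : Γ) :
    ℕ → Γ → ℝ≥0∞
  | 0, γ' => Green μ r γ γ'
  | k + 1, γ' => ∑' x : Γ, Green μ r γ x * chainSum μ r x k γ'

/-! ### Auxiliary lemmas -/

lemma convPow_add {Γ : Type*} [Group Γ] (μ : Γ → ℝ≥0∞) (m n : ℕ) (g : Γ) :
    convPow μ (m + n) g = ∑' x : Γ, convPow μ m x * convPow μ n (x⁻¹ * g) := by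
  induction m generalizing g with
  | zero =>
    rw [Nat.zero_add, eq_comm]
    calc ∑' x : Γ, convPow μ 0 x * convPow μ n (x⁻¹ * g)
        = ∑' x : Γ, (if x = (1:Γ) then convPow μ n (x⁻¹ * g) else 0) := by
          apply tsum_congr; intro x
          simp only [convPow]
          split_ifs <;> simp
      _ = ∑' x : Γ, (if x = (1:Γ) then convPow μ n g else 0) := by
          apply tsum_congr; intro x
          split_ifs with h
          · subst h; simp
          · rfl
      _ = convPow μ n g := tsum_ite_eq 1 _
  | succ m ih =>
    rw [show m + 1 + n = (m + n) + 1 from by omega, eq_comm]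
    calc ∑' x : Γ, convPow μ (m+1) x * convPow μ n (x⁻¹ * g)
        = ∑' x : Γ, (∑' y : Γ, μ y * convPow μ m (y⁻¹ * x)) * convPow μ n (x⁻¹ * g) := by
          apply tsum_congr; intro x; rfl
      _ = ∑' x : Γ, ∑' y : Γ, μ y * convPow μ m (y⁻¹ * x) * convPow μ n (x⁻¹ * g) := by
          apply tsum_congr; intro x; rw [ENNReal.tsum_mul_right]
      _ = ∑' y : Γ, ∑' x : Γ, μ y * convPow μ m (y⁻¹ * x) * convPow μ n (x⁻¹ * g) :=
          ENNReal.tsum_comm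
      _ = ∑' y : Γ, ∑' z : Γ, μ y * (convPow μ m z * convPow μ n (z⁻¹ * (y⁻¹ * g))) := by
          apply tsum_congr; intro y
          rw [← (Equiv.mulLeft y).tsum_eq]
          apply tsum_congr; intro z
          simp [mul_assoc, mul_inv_rev]
      _ = ∑' y : Γ, μ y * ∑' z : Γ, convPow μ m z * convPow μ n (z⁻¹ * (y⁻¹ * g)) := by
          apply tsum_congr; intro y; rw [ENNReal.tsum_mul_left]
      _ = ∑' y : Γ, μ y * convPow μ (m + n) (y⁻¹ * g) := by
          apply tsum_congr; intro y; rw [← ih]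
      _ = convPow μ (m + n + 1) g := rfl

/-- The equiv `(N, j) ↦ (N - j, j)` between `Σ N, Fin (N+1)` and `ℕ × ℕ`. -/
def diagEquiv : (Σ N : ℕ, Fin (N+1)) ≃ ℕ × ℕ where
  toFun p := (p.1 - p.2, p.2)
  invFun q := ⟨q.1 + q.2, ⟨q.2, by omega⟩⟩
  left_inv := fun ⟨N, j⟩ => by
    have hj : (j : ℕ) ≤ N := Nat.lt_succ_iff.mp j.isLt
    have h1 : N - (j:ℕ) + (j:ℕ) = N := Nat.sub_add_cancel hj
    refine Sigma.ext (by simpa using h1) ?_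
    rw [Fin.heq_ext_iff (by simpa using h1)]
  right_inv q := by simp

lemma tsum_tsum_add (G : ℕ → ℕ → ℝ≥0∞) :
    (∑' m : ℕ, ∑' n : ℕ, G (m + n) n) = ∑' N : ℕ, ∑ j ∈ Finset.range (N+1), G N j := by
  rw [← ENNReal.tsum_prod, ← diagEquiv.tsum_eq, ENNReal.tsum_sigma']
  apply tsum_congr; intro N
  rw [tsum_fintype]
  refine (Finset.sum_congr rfl fun j _ => ?_).trans
    (Fin.sum_univ_eq_sum_range (fun j => G N j) (N+1))
  have hj : (j : ℕ) ≤ N := Nat.lt_succ_iff.mp j.isLt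
  simp [diagEquiv, Nat.sub_add_cancel hj]

lemma green_mul {Γ : Type*} [Group Γ] (μ : Γ → ℝ≥0∞) (r : ℝ≥0∞) (c : ℕ → ℝ≥0∞) (γ γ' : Γ) :
    (∑' x : Γ, Green μ r γ x * ∑' n : ℕ, c n * r ^ n * convPow μ n (x⁻¹ * γ'))
      = ∑' n : ℕ, (∑ j ∈ Finset.range (n+1), c j) * r ^ n * convPow μ n (γ⁻¹ * γ') := by
  have expand : ∀ x : Γ, Green μ r γ x * (∑' n : ℕ, c n * r ^ n * convPow μ n (x⁻¹ * γ'))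
      = ∑' m : ℕ, ∑' n : ℕ,
          c n * r ^ (m + n) * (convPow μ m (γ⁻¹ * x) * convPow μ n (x⁻¹ * γ')) := by
    intro x
    rw [Green, ← ENNReal.tsum_mul_right]
    apply tsum_congr; intro m
    rw [← ENNReal.tsum_mul_left]
    apply tsum_congr; intro n
    rw [pow_add]; ring
  calc (∑' x : Γ, Green μ r γ x * ∑' n : ℕ, c n * r ^ n * convPow μ n (x⁻¹ * γ'))
      = ∑' x : Γ, ∑' m : ℕ, ∑' n : ℕ,
          c n * r ^ (m + n) * (convPow μ m (γ⁻¹ * x) * convPow μ n (x⁻¹ * γ')) :=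
        tsum_congr expand
    _ = ∑' m : ℕ, ∑' n : ℕ, c n * r ^ (m + n) *
          ∑' x : Γ, convPow μ m (γ⁻¹ * x) * convPow μ n (x⁻¹ * γ') := by
        rw [ENNReal.tsum_comm]
        apply tsum_congr; intro m
        rw [ENNReal.tsum_comm]
        apply tsum_congr; intro n
        rw [ENNReal.tsum_mul_left]
    _ = ∑' m : ℕ, ∑' n : ℕ, c n * r ^ (m + n) * convPow μ (m + n) (γ⁻¹ * γ') := by
        apply tsum_congr; intro m; apply tsum_congr; intro n
        congr 1
        rw [convPow_add μ m n (γ⁻¹ * γ'), ← (Equiv.mulLeft γ).tsum_eq]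
        apply tsum_congr; intro z
        simp [mul_assoc, mul_inv_rev]
    _ = ∑' N : ℕ, ∑ j ∈ Finset.range (N+1), c j * r ^ N * convPow μ N (γ⁻¹ * γ') :=
        tsum_tsum_add (fun N j => c j * r ^ N * convPow μ N (γ⁻¹ * γ'))
    _ = ∑' n : ℕ, (∑ j ∈ Finset.range (n+1), c j) * r ^ n * convPow μ n (γ⁻¹ * γ') := by
        apply tsum_congr; intro N
        rw [← Finset.sum_mul, ← Finset.sum_mul]

lemma hockey (k n : ℕ) :
    ∑ j ∈ Finset.range (n+1), (j+k).choose k = (n+k+1).choose (k+1) := by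
  induction n with
  | zero => simp
  | succ n ih =>
    rw [Finset.sum_range_succ, ih, show n+1+k = n+k+1 from by omega,
      show (n+k+1+1).choose (k+1) = (n+k+1).choose k + (n+k+1).choose (k+1) from
        Nat.choose_succ_succ _ _]
    exact Nat.add_comm _ _

lemma chain_eq {Γ : Type*} [Group Γ] (μ : Γ → ℝ≥0∞) (r : ℝ≥0∞) (k : ℕ) (γ γ' : Γ) :
    chainSum μ r γ k γ'
      = ∑' n : ℕ, ((n+k).choose k : ℝ≥0∞) * r ^ n * convPow μ n (γ⁻¹ * γ') := by
  induction k generalizing γ γ' with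
  | zero => simp [chainSum, Green, mul_comm]
  | succ k ih =>
    calc chainSum μ r γ (k+1) γ'
        = ∑' x : Γ, Green μ r γ x *
            ∑' n : ℕ, ((n+k).choose k : ℝ≥0∞) * r ^ n * convPow μ n (x⁻¹ * γ') := by
          rw [chainSum]
          exact tsum_congr fun x => by rw [ih]
      _ = ∑' n : ℕ, (∑ j ∈ Finset.range (n+1), ((j+k).choose k : ℝ≥0∞)) * r ^ n *
            convPow μ n (γ⁻¹ * γ') := green_mul μ r _ γ γ'
      _ = ∑' n : ℕ, ((n+(k+1)).choose (k+1) : ℝ≥0∞) * r ^ n * convPow μ n (γ⁻¹ * γ') := by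
          apply tsum_congr; intro n
          congr 2
          rw [← Nat.cast_sum, hockey k n]
          norm_cast

lemma fcoef_lt {Γ : Type*} [Group Γ] (μ : Γ → ℝ≥0∞) (γ γ' : Γ) :
    ∀ k n, n < k → Fcoef μ γ γ' k n = 0
  | k+1, 0, _ => rfl
  | k+1, n+1, h => by
    show ((n : ℝ≥0∞) + 2) * Fcoef μ γ γ' k n = 0
    rw [fcoef_lt μ γ γ' k n (by omega), mul_zero]

lemma natkey (k n : ℕ) :
    (k+2).factorial * (n+k+2).choose (k+2)
      = (n+k+2) * ((k+1).factorial * (n+k+1).choose (k+1)) := by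
  have h1 := Nat.choose_mul_factorial_mul_factorial (show k+2 ≤ n+k+2 by omega)
  have h2 := Nat.choose_mul_factorial_mul_factorial (show k+1 ≤ n+k+1 by omega)
  rw [show n+k+2-(k+2) = n from by omega] at h1
  rw [show n+k+1-(k+1) = n from by omega] at h2
  have h3 : (n+k+2).factorial = (n+k+2) * (n+k+1).factorial := rfl
  apply Nat.eq_of_mul_eq_mul_right (Nat.factorial_pos n)
  calc ((k+2).factorial * (n+k+2).choose (k+2)) * n.factorial
      = (n+k+2).choose (k+2) * (k+2).factorial * n.factorial := by ring
    _ = (n+k+2).factorial := h1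
    _ = (n+k+2) * ((n+k+1).choose (k+1) * (k+1).factorial * n.factorial) := by rw [h3, h2]
    _ = (n+k+2) * ((k+1).factorial * (n+k+1).choose (k+1)) * n.factorial := by ring

lemma fcoef_eq {Γ : Type*} [Group Γ] (μ : Γ → ℝ≥0∞) (γ γ' : Γ) (k n : ℕ) :
    Fcoef μ γ γ' k (n+k)
      = (((k+1).factorial * (n+k+1).choose (k+1) : ℕ) : ℝ≥0∞) * convPow μ n (γ⁻¹ * γ') := by
  induction k with
  | zero =>
    show ((n : ℝ≥0∞) + 1) * convPow μ n (γ⁻¹ * γ') = _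
    congr 1
    rw [Nat.choose_one_right]
    push_cast [Nat.factorial_one]
    ring
  | succ k ih =>
    show (((n+k : ℕ) : ℝ≥0∞) + 2) * Fcoef μ γ γ' k (n+k) = _
    rw [ih, ← mul_assoc]
    congr 1
    rw [show n+(k+1)+1 = n+k+2 from by omega, natkey k n]
    push_cast
    ring

/-- For all `γ, γ' ∈ Γ` and `r ∈ [0,R_μ]`, one has `F_k(r) = k! r^{k-1} I^{(k)}(r)`
(stated for `k+1`, `k ≥ 0`, so that it covers every `k ≥ 1`). -/
theorem Fk_eq_factorial_Ik {Γ : Type*} [Group Γ] [Countable Γ]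
    (μ : Γ → ℝ≥0∞) (hμ : ∑' γ : Γ, μ γ = 1)
    (γ γ' : Γ) (r : ℝ≥0∞) (hr : r ≤ specRadius μ) (k : ℕ) :
    ∑' n : ℕ, Fcoef μ γ γ' k n * r ^ n
      = (Nat.factorial (k + 1) : ℝ≥0∞) * r ^ k * chainSum μ r γ (k + 1) γ' := by
  have hinj : Function.Injective (fun n : ℕ => n + k) := add_left_injective k
  have hsupp : Function.support (fun n : ℕ => Fcoef μ γ γ' k n * r ^ n)
      ⊆ Set.range (fun n : ℕ => n + k) := by
    intro n hn
    rcases Nat.lt_or_ge n k with h | h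
    · exact absurd (show Fcoef μ γ γ' k n * r ^ n = 0 by
        rw [fcoef_lt μ γ γ' k n h, zero_mul]) hn
    · exact ⟨n - k, show n - k + k = n by omega⟩
  rw [← hinj.tsum_eq hsupp, chain_eq]
  rw [← ENNReal.tsum_mul_left]
  apply tsum_congr; intro n
  beta_reduce
  rw [fcoef_eq μ γ γ' k n, show n+(k+1) = n+k+1 from rfl]
  rw [pow_add]
  push_cast
  ring
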